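/- arXiv:1701.09055 — 2 statements merged into one kernel-verified Lean document; each statement's English description precedes it below -/
import Mathlib

section
/- The function (μ,ν) ↦ W₂²(μ,ν) is a negative definite kernel on W₂(ℝ): for any n, any μ₁,…,μₙ ∈ W₂(ℝ) and any c₁,…,cₙ ∈ ℝ with Σ cᵢ = 0, one has Σ_{i,j} cᵢ cⱼ W₂²(μᵢ,μⱼ) ≤ 0. -/
/-!
Let `quantile μ` be the quantile function of `μ`. Pushing Lebesgue measure on `(0, 1)` forward
along `t ↦ (quantile μ t, quantile ν t)` gives a coupling of `μ` and `ν` that puts on every product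
`U ×ˢ V` of two upper (or two lower) sets the largest mass any coupling can, `min (μ U) (ν V)`:
the preimages of `U` and `V` under two monotone maps are nested. Writing `x * y` as an integral
of such orthant indicators over `(a, b) ∈ (0, ∞)²` (separately for the four sign patterns), this
coupling maximises `∫ x * y` among all couplings, hence minimises `∫ (x - y) ^ 2`. Thus
`Wsq μ ν = ‖quantile μ - quantile ν‖ ^ 2` in `L²(0, 1)`, and in a real inner product space
`∑ cᵢ cⱼ ‖xᵢ - xⱼ‖ ^ 2 = -2 ‖∑ cᵢ • xᵢ‖ ^ 2` as soon as `∑ cᵢ = 0`.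
-/

open MeasureTheory ProbabilityTheory Real BigOperators

noncomputable def Wsq (μ ν : MeasureTheory.Measure ℝ) : ℝ :=
  sInf { c : ℝ | ∃ m : MeasureTheory.Measure (ℝ × ℝ),
    m.map Prod.fst = μ ∧ m.map Prod.snd = ν ∧ c = ∫ p, (p.1 - p.2) ^ 2 ∂m }

/-- Quadratic Wasserstein distance. -/
noncomputable def W2 (μ ν : MeasureTheory.Measure ℝ) : ℝ := Real.sqrt (Wsq μ ν)

/-- Finite second moment. -/
def FiniteSecondMoment (μ : MeasureTheory.Measure ℝ) : Prop :=
  MeasureTheory.Integrable (fun x => x ^ 2) μ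

open Set

section Comonotone

variable {α β : Type*} {f g : α → β} {s : Set α} {U V : Set β}

section Order

variable [LinearOrder α] [Preorder β]

theorem MonotoneOn.preimage_inter_total (hf : MonotoneOn f s) (hg : MonotoneOn g s)
    (hU : IsUpperSet U) (hV : IsUpperSet V) :
    f ⁻¹' U ∩ s ⊆ g ⁻¹' V ∩ s ∨ g ⁻¹' V ∩ s ⊆ f ⁻¹' U ∩ s := by
  by_contra! h
  obtain ⟨a, ⟨hfa, ha⟩, hga⟩ := not_subset.1 h.1
  obtain ⟨b, ⟨hgb, hb⟩, hfb⟩ := not_subset.1 h.2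
  rcases le_total a b with hab | hba
  · exact hfb ⟨hU (hf ha hb hab) hfa, hb⟩
  · exact hga ⟨hV (hg hb ha hba) hgb, ha⟩

theorem MonotoneOn.preimage_inter_total_of_isLowerSet (hf : MonotoneOn f s)
    (hg : MonotoneOn g s) (hU : IsLowerSet U) (hV : IsLowerSet V) :
    f ⁻¹' U ∩ s ⊆ g ⁻¹' V ∩ s ∨ g ⁻¹' V ∩ s ⊆ f ⁻¹' U ∩ s :=
  hf.dual.preimage_inter_total hg.dual hU.toDual hV.toDual

end Order

theorem MeasureTheory.measure_inter_eq_min_of_subset_or_subset [MeasurableSpace α]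
    {ρ : Measure α} {A B : Set α} (h : A ⊆ B ∨ B ⊆ A) : ρ (A ∩ B) = min (ρ A) (ρ B) := by
  rcases h with h | h
  · rw [inter_eq_left.2 h, min_eq_left (measure_mono h)]
  · rw [inter_eq_right.2 h, min_eq_right (measure_mono h)]

variable [MeasurableSpace α] [MeasurableSpace β] {ρ : Measure α}

theorem MeasureTheory.Measure.map_prodMk_restrict_prod_eq_min (hs : MeasurableSet s)
    (hf : AEMeasurable f (ρ.restrict s)) (hg : AEMeasurable g (ρ.restrict s))
    (hU : MeasurableSet U) (hV : MeasurableSet V)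
    (htot : f ⁻¹' U ∩ s ⊆ g ⁻¹' V ∩ s ∨ g ⁻¹' V ∩ s ⊆ f ⁻¹' U ∩ s) :
    (ρ.restrict s).map (fun x => (f x, g x)) (U ×ˢ V)
      = min ((ρ.restrict s).map f U) ((ρ.restrict s).map g V) := by
  rw [map_apply_of_aemeasurable (hf.prodMk hg) (hU.prod hV), map_apply_of_aemeasurable hf hU,
    map_apply_of_aemeasurable hg hV, mk_preimage_prod, restrict_apply' hs, restrict_apply' hs,
    restrict_apply' hs, inter_inter_distrib_right, measure_inter_eq_min_of_subset_or_subset htot]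

end Comonotone

-- Only the values on `Ioo 0 1` matter: elsewhere the `sInf` is of an empty or unbounded set.
noncomputable def quantile (μ : Measure ℝ) (t : ℝ) : ℝ := sInf {x | t ≤ cdf μ x}

noncomputable def unitVolume : Measure ℝ := volume.restrict (Ioo 0 1)

instance : IsProbabilityMeasure unitVolume := ⟨by simp [unitVolume]⟩

theorem unitVolume_Iic {c : ℝ} (hc : c ∈ Icc 0 1) : unitVolume (Iic c) = ENNReal.ofReal c := by
  rw [unitVolume, Measure.restrict_apply measurableSet_Iic]
  refine le_antisymm ?_ ?_
  · calc volume (Iic c ∩ Ioo 0 1) ≤ volume (Icc 0 c) :=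
          measure_mono fun x hx => ⟨hx.2.1.le, hx.1⟩
      _ = ENNReal.ofReal c := by simp
  · calc ENNReal.ofReal c = volume (Ioo 0 c) := by simp
      _ ≤ volume (Iic c ∩ Ioo 0 1) :=
          measure_mono fun x hx => ⟨hx.2.le, hx.1, hx.2.trans_le hc.2⟩

section Quantile

variable {μ : Measure ℝ}

theorem quantile_le_iff {t x : ℝ} (ht : t ∈ Ioo 0 1) : quantile μ t ≤ x ↔ t ≤ cdf μ x := by
  set S := {x | t ≤ cdf μ x}
  have hne : S.Nonempty := ((tendsto_cdf_atTop μ).eventually (eventually_ge_nhds ht.2)).exists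
  have hbdd : BddBelow S := by
    obtain ⟨y, hy⟩ := ((tendsto_cdf_atBot μ).eventually (eventually_lt_nhds ht.1)).exists
    exact ⟨y, fun z hz => le_of_not_gt fun hzy => (hz.trans (monotone_cdf μ hzy.le)).not_gt hy⟩
  refine ⟨fun h => ?_, fun h => csInf_le hbdd h⟩
  -- right-continuity of `cdf μ`: `S` contains its infimum
  have hmem : t ≤ cdf μ (quantile μ t) := by
    refine ge_of_tendsto (((cdf μ).right_continuous _).mono Ioi_subset_Ici_self) ?_
    filter_upwards [self_mem_nhdsWithin] with y hy
    obtain ⟨z, hz, hzy⟩ := exists_lt_of_csInf_lt hne hy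
    exact hz.trans (monotone_cdf μ hzy.le)
  exact hmem.trans (monotone_cdf μ h)

theorem monotoneOn_quantile : MonotoneOn (quantile μ) (Ioo 0 1) := fun _ hs _ ht hst =>
  (quantile_le_iff hs).2 (hst.trans ((quantile_le_iff ht).1 le_rfl))

theorem aemeasurable_quantile : AEMeasurable (quantile μ) unitVolume :=
  aemeasurable_restrict_of_monotoneOn measurableSet_Ioo monotoneOn_quantile

theorem map_quantile_unitVolume [IsProbabilityMeasure μ] : unitVolume.map (quantile μ) = μ := by
  have := Measure.isProbabilityMeasure_map (aemeasurable_quantile (μ := μ))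
  refine Measure.ext_of_Iic _ _ fun x => ?_
  have hpre : quantile μ ⁻¹' Iic x ∩ Ioo 0 1 = Iic (cdf μ x) ∩ Ioo 0 1 := by
    ext t
    simp only [mem_inter_iff, mem_preimage, mem_Iic, and_congr_left_iff]
    exact quantile_le_iff
  rw [Measure.map_apply_of_aemeasurable aemeasurable_quantile measurableSet_Iic, unitVolume,
    Measure.restrict_apply' measurableSet_Ioo, hpre, ← Measure.restrict_apply' measurableSet_Ioo,
    ← unitVolume, unitVolume_Iic ⟨cdf_nonneg μ x, cdf_le_one μ x⟩, ofReal_cdf]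

end Quantile

noncomputable def quantileCoupling (μ ν : Measure ℝ) : Measure (ℝ × ℝ) :=
  unitVolume.map fun t => (quantile μ t, quantile ν t)

section QuantileCoupling

variable {μ ν : Measure ℝ} {U V : Set ℝ}

theorem aemeasurable_quantile_prodMk :
    AEMeasurable (fun t => (quantile μ t, quantile ν t)) unitVolume :=
  aemeasurable_quantile.prodMk aemeasurable_quantile

instance : IsProbabilityMeasure (quantileCoupling μ ν) :=
  Measure.isProbabilityMeasure_map aemeasurable_quantile_prodMk

theorem quantileCoupling_map_fst [IsProbabilityMeasure μ] :
    (quantileCoupling μ ν).map Prod.fst = μ := by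
  rw [quantileCoupling, AEMeasurable.map_map_of_aemeasurable measurable_fst.aemeasurable
    aemeasurable_quantile_prodMk]
  exact map_quantile_unitVolume

theorem quantileCoupling_map_snd [IsProbabilityMeasure ν] :
    (quantileCoupling μ ν).map Prod.snd = ν := by
  rw [quantileCoupling, AEMeasurable.map_map_of_aemeasurable measurable_snd.aemeasurable
    aemeasurable_quantile_prodMk]
  exact map_quantile_unitVolume

theorem quantileCoupling_prod_eq_min [IsProbabilityMeasure μ] [IsProbabilityMeasure ν]
    (hU : MeasurableSet U) (hV : MeasurableSet V)
    (hUV : IsUpperSet U ∧ IsUpperSet V ∨ IsLowerSet U ∧ IsLowerSet V) :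
    quantileCoupling μ ν (U ×ˢ V) = min (μ U) (ν V) := by
  conv_rhs => rw [← map_quantile_unitVolume (μ := μ), ← map_quantile_unitVolume (μ := ν)]
  refine Measure.map_prodMk_restrict_prod_eq_min measurableSet_Ioo aemeasurable_quantile
    aemeasurable_quantile hU hV ?_
  rcases hUV with ⟨hU', hV'⟩ | ⟨hU', hV'⟩
  · exact monotoneOn_quantile.preimage_inter_total monotoneOn_quantile hU' hV'
  · exact monotoneOn_quantile.preimage_inter_total_of_isLowerSet monotoneOn_quantile hU' hV'

end QuantileCoupling

section Coupling

variable {μ ν : Measure ℝ} {m : Measure (ℝ × ℝ)} {U V : Set ℝ}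

theorem measure_prod_le_min (hm₁ : m.map Prod.fst = μ) (hm₂ : m.map Prod.snd = ν)
    (hU : MeasurableSet U) (hV : MeasurableSet V) : m (U ×ˢ V) ≤ min (μ U) (ν V) := by
  rw [← hm₁, ← hm₂, Measure.map_apply measurable_fst hU, Measure.map_apply measurable_snd hV]
  exact le_min (measure_mono (prod_subset_preimage_fst _ _))
    (measure_mono (prod_subset_preimage_snd _ _))

theorem measure_prod_add_measure_prod_compl (hm₁ : m.map Prod.fst = μ) (hU : MeasurableSet U)
    (hV : MeasurableSet V) : m (U ×ˢ V) + m (U ×ˢ Vᶜ) = μ U := by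
  rw [← measure_union (disjoint_prod.2 (Or.inr disjoint_compl_right)) (hU.prod hV.compl),
    ← prod_union, union_compl_self, prod_univ, ← hm₁, Measure.map_apply measurable_fst hU]

theorem measure_prod_add_measure_compl_prod (hm₂ : m.map Prod.snd = ν) (hU : MeasurableSet U)
    (hV : MeasurableSet V) : m (U ×ˢ V) + m (Uᶜ ×ˢ V) = ν V := by
  rw [← measure_union (disjoint_prod.2 (Or.inl disjoint_compl_right)) (hU.compl.prod hV),
    ← union_prod, union_compl_self, univ_prod, ← hm₂, Measure.map_apply measurable_snd hV]

variable [IsProbabilityMeasure μ] [IsProbabilityMeasure ν]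

theorem measure_prod_le_quantileCoupling (hm₁ : m.map Prod.fst = μ) (hm₂ : m.map Prod.snd = ν)
    (hU : MeasurableSet U) (hV : MeasurableSet V)
    (hUV : IsUpperSet U ∧ IsUpperSet V ∨ IsLowerSet U ∧ IsLowerSet V) :
    m (U ×ˢ V) ≤ quantileCoupling μ ν (U ×ˢ V) := by
  rw [quantileCoupling_prod_eq_min hU hV hUV]
  exact measure_prod_le_min hm₁ hm₂ hU hV

theorem quantileCoupling_le_measure_prod (hm₁ : m.map Prod.fst = μ) (hm₂ : m.map Prod.snd = ν)
    (hU : MeasurableSet U) (hV : MeasurableSet V)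
    (hUV : IsUpperSet U ∧ IsLowerSet V ∨ IsLowerSet U ∧ IsUpperSet V) :
    quantileCoupling μ ν (U ×ˢ V) ≤ m (U ×ˢ V) := by
  -- both couplings split `μ U` (resp. `ν V`) along `V` (resp. `U`), and the complement is upper
  rcases hUV with ⟨hU', hV'⟩ | ⟨hU', hV'⟩
  · have hle : m (U ×ˢ Vᶜ) ≤ quantileCoupling μ ν (U ×ˢ Vᶜ) :=
      measure_prod_le_quantileCoupling hm₁ hm₂ hU hV.compl (Or.inl ⟨hU', hV'.compl⟩)
    refine ENNReal.le_of_add_le_add_right (measure_ne_top (quantileCoupling μ ν) (U ×ˢ Vᶜ)) ?_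
    rw [measure_prod_add_measure_prod_compl quantileCoupling_map_fst hU hV,
      ← measure_prod_add_measure_prod_compl hm₁ hU hV]
    gcongr
  · have hle : m (Uᶜ ×ˢ V) ≤ quantileCoupling μ ν (Uᶜ ×ˢ V) :=
      measure_prod_le_quantileCoupling hm₁ hm₂ hU.compl hV (Or.inl ⟨hU'.compl, hV'⟩)
    refine ENNReal.le_of_add_le_add_right (measure_ne_top (quantileCoupling μ ν) (Uᶜ ×ˢ V)) ?_
    rw [measure_prod_add_measure_compl_prod quantileCoupling_map_snd hU hV,
      ← measure_prod_add_measure_compl_prod hm₂ hU hV]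
    gcongr

end Coupling

theorem lintegral_ofReal_mul_ofReal_eq {X : Type*} [MeasurableSpace X] (m : Measure X) [SFinite m]
    {f g : X → ℝ} (hf : Measurable f) (hg : Measurable g) :
    ∫⁻ x, ENNReal.ofReal (f x) * ENNReal.ofReal (g x) ∂m
      = ∫⁻ q, m (f ⁻¹' Ioi q.1 ∩ g ⁻¹' Ioi q.2)
          ∂((volume.restrict (Ioi 0)).prod (volume.restrict (Ioi 0))) := by
  set ℓ : Measure ℝ := volume.restrict (Ioi 0)
  set S : Set (X × ℝ × ℝ) := {z | z.2.1 < f z.1 ∧ z.2.2 < g z.1}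
  have hS : MeasurableSet S :=
    (measurableSet_lt (measurable_fst.comp measurable_snd) (hf.comp measurable_fst)).inter
      (measurableSet_lt (measurable_snd.comp measurable_snd) (hg.comp measurable_fst))
  have hℓ (a : ℝ) : ℓ (Iio a) = ENNReal.ofReal a := by
    rw [Measure.restrict_apply measurableSet_Iio, Iio_inter_Ioi, Real.volume_Ioo, sub_zero]
  calc ∫⁻ x, ENNReal.ofReal (f x) * ENNReal.ofReal (g x) ∂m
      = ∫⁻ x, ℓ.prod ℓ (Prod.mk x ⁻¹' S) ∂m := by
        refine lintegral_congr fun x => ?_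
        rw [← hℓ, ← hℓ, ← Measure.prod_prod]
        rfl
    _ = m.prod (ℓ.prod ℓ) S := (Measure.prod_apply hS).symm
    _ = ∫⁻ q, m ((fun x => (x, q)) ⁻¹' S) ∂(ℓ.prod ℓ) := Measure.prod_apply_symm hS

theorem lintegral_ofReal_mul_le_of_measure_prod_le {m m' : Measure (ℝ × ℝ)} [SFinite m]
    [SFinite m'] {f g : ℝ → ℝ} (hf : Measurable f) (hg : Measurable g)
    (h : ∀ a b, m ((f ⁻¹' Ioi a) ×ˢ (g ⁻¹' Ioi b)) ≤ m' ((f ⁻¹' Ioi a) ×ˢ (g ⁻¹' Ioi b))) :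
    ∫⁻ p, ENNReal.ofReal (f p.1) * ENNReal.ofReal (g p.2) ∂m
      ≤ ∫⁻ p, ENNReal.ofReal (f p.1) * ENNReal.ofReal (g p.2) ∂m' := by
  have hf' : Measurable fun p : ℝ × ℝ => f p.1 := hf.comp measurable_fst
  have hg' : Measurable fun p : ℝ × ℝ => g p.2 := hg.comp measurable_snd
  rw [lintegral_ofReal_mul_ofReal_eq m hf' hg', lintegral_ofReal_mul_ofReal_eq m' hf' hg']
  exact lintegral_mono fun q => h q.1 q.2

theorem isProbabilityMeasure_of_map_eq {X Y : Type*} [MeasurableSpace X] [MeasurableSpace Y]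
    {m : Measure X} {μ : Measure Y} [IsProbabilityMeasure μ] {f : X → Y} (h : m.map f = μ) :
    IsProbabilityMeasure m :=
  have : IsProbabilityMeasure (m.map f) := h ▸ ‹_›
  Measure.isProbabilityMeasure_of_map f

section Comparison

variable {μ ν : Measure ℝ} [IsProbabilityMeasure μ] [IsProbabilityMeasure ν]
  {m : Measure (ℝ × ℝ)} {f g : ℝ → ℝ}

theorem lintegral_ofReal_mul_le_quantileCoupling (hm₁ : m.map Prod.fst = μ)
    (hm₂ : m.map Prod.snd = ν) (hf : Measurable f) (hg : Measurable g)
    (hfg : Monotone f ∧ Monotone g ∨ Antitone f ∧ Antitone g) :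
    ∫⁻ p, ENNReal.ofReal (f p.1) * ENNReal.ofReal (g p.2) ∂m
      ≤ ∫⁻ p, ENNReal.ofReal (f p.1) * ENNReal.ofReal (g p.2) ∂(quantileCoupling μ ν) := by
  have := isProbabilityMeasure_of_map_eq hm₁
  refine lintegral_ofReal_mul_le_of_measure_prod_le hf hg fun a b =>
    measure_prod_le_quantileCoupling hm₁ hm₂ (hf measurableSet_Ioi) (hg measurableSet_Ioi) ?_
  rcases hfg with ⟨hf', hg'⟩ | ⟨hf', hg'⟩
  · exact Or.inl ⟨(isUpperSet_Ioi a).preimage hf', (isUpperSet_Ioi b).preimage hg'⟩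
  · exact Or.inr ⟨fun _ _ h ha => isUpperSet_Ioi a (hf' h) ha,
      fun _ _ h hb => isUpperSet_Ioi b (hg' h) hb⟩

theorem quantileCoupling_lintegral_ofReal_mul_le (hm₁ : m.map Prod.fst = μ)
    (hm₂ : m.map Prod.snd = ν) (hf : Measurable f) (hg : Measurable g)
    (hfg : Monotone f ∧ Antitone g ∨ Antitone f ∧ Monotone g) :
    ∫⁻ p, ENNReal.ofReal (f p.1) * ENNReal.ofReal (g p.2) ∂(quantileCoupling μ ν)
      ≤ ∫⁻ p, ENNReal.ofReal (f p.1) * ENNReal.ofReal (g p.2) ∂m := by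
  have := isProbabilityMeasure_of_map_eq hm₁
  refine lintegral_ofReal_mul_le_of_measure_prod_le hf hg fun a b =>
    quantileCoupling_le_measure_prod hm₁ hm₂ (hf measurableSet_Ioi) (hg measurableSet_Ioi) ?_
  rcases hfg with ⟨hf', hg'⟩ | ⟨hf', hg'⟩
  · exact Or.inl ⟨(isUpperSet_Ioi a).preimage hf', fun _ _ h hb => isUpperSet_Ioi b (hg' h) hb⟩
  · exact Or.inr ⟨fun _ _ h ha => isUpperSet_Ioi a (hf' h) ha, (isUpperSet_Ioi b).preimage hg'⟩

end Comparison

theorem ENNReal.ofReal_mul_eq_add (x y : ℝ) : ENNReal.ofReal (x * y)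
    = ENNReal.ofReal x * ENNReal.ofReal y + ENNReal.ofReal (-x) * ENNReal.ofReal (-y) := by
  rcases le_total 0 x with hx | hx <;> rcases le_total 0 y with hy | hy
  · rw [ENNReal.ofReal_mul hx, ENNReal.ofReal_of_nonpos (neg_nonpos.2 hx), zero_mul, add_zero]
  · rw [ENNReal.ofReal_of_nonpos (mul_nonpos_of_nonneg_of_nonpos hx hy),
      ENNReal.ofReal_of_nonpos hy, ENNReal.ofReal_of_nonpos (neg_nonpos.2 hx)]
    simp
  · rw [ENNReal.ofReal_of_nonpos (mul_nonpos_of_nonpos_of_nonneg hx hy),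
      ENNReal.ofReal_of_nonpos hx, ENNReal.ofReal_of_nonpos (neg_nonpos.2 hy)]
    simp
  · rw [← neg_mul_neg, ENNReal.ofReal_mul (neg_nonneg.2 hx), ENNReal.ofReal_of_nonpos hx,
      zero_mul, zero_add]

section SecondMoment

variable {μ ν : Measure ℝ} {m : Measure (ℝ × ℝ)}

theorem integrable_fst_sq (hm₁ : m.map Prod.fst = μ) (hμ : FiniteSecondMoment μ) :
    Integrable (fun p : ℝ × ℝ => p.1 ^ 2) m := by
  rw [← hm₁] at hμ
  exact (integrable_map_measure (by fun_prop) measurable_fst.aemeasurable).1 hμ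

theorem integrable_snd_sq (hm₂ : m.map Prod.snd = ν) (hν : FiniteSecondMoment ν) :
    Integrable (fun p : ℝ × ℝ => p.2 ^ 2) m := by
  rw [← hm₂] at hν
  exact (integrable_map_measure (by fun_prop) measurable_snd.aemeasurable).1 hν

theorem integrable_fst_mul_snd (hm₁ : m.map Prod.fst = μ) (hm₂ : m.map Prod.snd = ν)
    (hμ : FiniteSecondMoment μ) (hν : FiniteSecondMoment ν) :
    Integrable (fun p : ℝ × ℝ => p.1 * p.2) m := by
  refine ((integrable_fst_sq hm₁ hμ).add (integrable_snd_sq hm₂ hν)).mono' (by fun_prop)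
    (ae_of_all _ fun p => ?_)
  rw [Real.norm_eq_abs, abs_mul, Pi.add_apply]
  nlinarith [sq_nonneg (|p.1| - |p.2|), sq_abs p.1, sq_abs p.2]

theorem integral_sub_sq_eq (hm₁ : m.map Prod.fst = μ) (hm₂ : m.map Prod.snd = ν)
    (hμ : FiniteSecondMoment μ) (hν : FiniteSecondMoment ν) :
    ∫ p, (p.1 - p.2) ^ 2 ∂m = ∫ x, x ^ 2 ∂μ + ∫ x, x ^ 2 ∂ν - 2 * ∫ p, p.1 * p.2 ∂m := by
  have h₁ := integrable_fst_sq hm₁ hμ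
  have h₂ := integrable_snd_sq hm₂ hν
  have hsum : Integrable (fun p : ℝ × ℝ => p.1 ^ 2 + p.2 ^ 2) m := h₁.add h₂
  have hmul := (integrable_fst_mul_snd hm₁ hm₂ hμ hν).const_mul 2
  have hexp : (fun p : ℝ × ℝ => (p.1 - p.2) ^ 2)
      = fun p => p.1 ^ 2 + p.2 ^ 2 - 2 * (p.1 * p.2) := by
    ext p; ring
  rw [hexp, integral_sub hsum hmul, integral_add h₁ h₂, integral_const_mul, ← hm₁, ← hm₂,
    integral_map measurable_fst.aemeasurable (by fun_prop),
    integral_map measurable_snd.aemeasurable (by fun_prop)]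

end SecondMoment

section Optimality

variable {μ ν : Measure ℝ} [IsProbabilityMeasure μ] [IsProbabilityMeasure ν]
  {m : Measure (ℝ × ℝ)}

theorem lintegral_ofReal_fst_mul_snd_le (hm₁ : m.map Prod.fst = μ) (hm₂ : m.map Prod.snd = ν) :
    ∫⁻ p, ENNReal.ofReal (p.1 * p.2) ∂m
      ≤ ∫⁻ p, ENNReal.ofReal (p.1 * p.2) ∂(quantileCoupling μ ν) := by
  have hmeas : Measurable fun p : ℝ × ℝ => ENNReal.ofReal p.1 * ENNReal.ofReal p.2 := by
    fun_prop
  simp_rw [ENNReal.ofReal_mul_eq_add]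
  rw [lintegral_add_left hmeas, lintegral_add_left hmeas]
  exact add_le_add
    (lintegral_ofReal_mul_le_quantileCoupling hm₁ hm₂ measurable_id measurable_id
      (Or.inl ⟨monotone_id, monotone_id⟩))
    (lintegral_ofReal_mul_le_quantileCoupling hm₁ hm₂ measurable_neg measurable_neg
      (Or.inr ⟨monotone_id.neg, monotone_id.neg⟩))

theorem lintegral_ofReal_neg_fst_mul_snd_le (hm₁ : m.map Prod.fst = μ)
    (hm₂ : m.map Prod.snd = ν) :
    ∫⁻ p, ENNReal.ofReal (-(p.1 * p.2)) ∂(quantileCoupling μ ν)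
      ≤ ∫⁻ p, ENNReal.ofReal (-(p.1 * p.2)) ∂m := by
  have hmeas : Measurable fun p : ℝ × ℝ => ENNReal.ofReal p.1 * ENNReal.ofReal (-p.2) := by
    fun_prop
  simp_rw [← mul_neg, ENNReal.ofReal_mul_eq_add, neg_neg]
  rw [lintegral_add_left hmeas, lintegral_add_left hmeas]
  exact add_le_add
    (quantileCoupling_lintegral_ofReal_mul_le hm₁ hm₂ measurable_id measurable_neg
      (Or.inl ⟨monotone_id, monotone_id.neg⟩))
    (quantileCoupling_lintegral_ofReal_mul_le hm₁ hm₂ measurable_neg measurable_id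
      (Or.inr ⟨monotone_id.neg, monotone_id⟩))

theorem integral_fst_mul_snd_le (hm₁ : m.map Prod.fst = μ) (hm₂ : m.map Prod.snd = ν)
    (hμ : FiniteSecondMoment μ) (hν : FiniteSecondMoment ν) :
    ∫ p, p.1 * p.2 ∂m ≤ ∫ p, p.1 * p.2 ∂(quantileCoupling μ ν) := by
  have hm := integrable_fst_mul_snd hm₁ hm₂ hμ hν
  have hq := integrable_fst_mul_snd quantileCoupling_map_fst quantileCoupling_map_snd hμ hν
  rw [integral_eq_lintegral_pos_part_sub_lintegral_neg_part hm,
    integral_eq_lintegral_pos_part_sub_lintegral_neg_part hq]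
  exact sub_le_sub
    (ENNReal.toReal_mono hq.lintegral_lt_top.ne (lintegral_ofReal_fst_mul_snd_le hm₁ hm₂))
    (ENNReal.toReal_mono hm.neg.lintegral_lt_top.ne
      (lintegral_ofReal_neg_fst_mul_snd_le hm₁ hm₂))

end Optimality

theorem sum_sum_mul_norm_sub_sq {E ι : Type*} [NormedAddCommGroup E] [InnerProductSpace ℝ E]
    (s : Finset ι) (c : ι → ℝ) (x : ι → E) (hc : ∑ i ∈ s, c i = 0) :
    ∑ i ∈ s, ∑ j ∈ s, c i * c j * ‖x i - x j‖ ^ 2 = -2 * ‖∑ i ∈ s, c i • x i‖ ^ 2 := by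
  have hinner :
      ‖∑ i ∈ s, c i • x i‖ ^ 2 = ∑ i ∈ s, ∑ j ∈ s, c i * c j * inner ℝ (x i) (x j) := by
    rw [← real_inner_self_eq_norm_sq, sum_inner]
    simp [inner_sum, real_inner_smul_left, real_inner_smul_right, mul_assoc, mul_left_comm]
  have hterm (i j : ι) : c i * c j * ‖x i - x j‖ ^ 2 = c j * (c i * ‖x i‖ ^ 2)
      + c i * (c j * ‖x j‖ ^ 2) - 2 * (c i * c j * inner ℝ (x i) (x j)) := by
    rw [norm_sub_sq_real]; ring
  simp only [hterm, Finset.sum_add_distrib, Finset.sum_sub_distrib, ← Finset.sum_mul,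
    ← Finset.mul_sum, hc, ← hinner]
  simp

section Wasserstein

variable {μ ν : Measure ℝ} [IsProbabilityMeasure μ] [IsProbabilityMeasure ν]

theorem Wsq_eq_integral_quantileCoupling (hμ : FiniteSecondMoment μ)
    (hν : FiniteSecondMoment ν) :
    Wsq μ ν = ∫ p, (p.1 - p.2) ^ 2 ∂(quantileCoupling μ ν) := by
  refine IsLeast.csInf_eq ⟨⟨_, quantileCoupling_map_fst, quantileCoupling_map_snd, rfl⟩, ?_⟩
  rintro _ ⟨m, hm₁, hm₂, rfl⟩
  rw [integral_sub_sq_eq quantileCoupling_map_fst quantileCoupling_map_snd hμ hν,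
    integral_sub_sq_eq hm₁ hm₂ hμ hν]
  linarith [integral_fst_mul_snd_le hm₁ hm₂ hμ hν]

theorem memLp_quantile (hμ : FiniteSecondMoment μ) : MemLp (quantile μ) 2 unitVolume := by
  refine (memLp_two_iff_integrable_sq aemeasurable_quantile.aestronglyMeasurable).2 ?_
  rw [FiniteSecondMoment, ← map_quantile_unitVolume (μ := μ)] at hμ
  exact (integrable_map_measure (by fun_prop) aemeasurable_quantile).1 hμ

theorem Wsq_eq_norm_sub_sq (hμ : FiniteSecondMoment μ) (hν : FiniteSecondMoment ν) :
    Wsq μ ν = ‖(memLp_quantile hμ).toLp - (memLp_quantile hν).toLp‖ ^ 2 := by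
  rw [Wsq_eq_integral_quantileCoupling hμ hν, quantileCoupling,
    integral_map aemeasurable_quantile_prodMk (by fun_prop), ← MemLp.toLp_sub,
    ← real_inner_self_eq_norm_sq, L2.inner_def]
  refine integral_congr_ae (((memLp_quantile hμ).sub (memLp_quantile hν)).coeFn_toLp.mono
    fun t ht => ?_)
  simp [ht, sq]

end Wasserstein

/-- The squared Wasserstein distance is a negative definite kernel on W₂(ℝ). -/
theorem Wsq_negDef (n : ℕ) (μ : Fin n → Measure ℝ)
    (hprob : ∀ i, IsProbabilityMeasure (μ i))
    (hmom : ∀ i, FiniteSecondMoment (μ i))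
    (c : Fin n → ℝ) (hc : ∑ i, c i = 0) :
    ∑ i, ∑ j, c i * c j * Wsq (μ i) (μ j) ≤ 0 := by
  have hW (i j : Fin n) : Wsq (μ i) (μ j)
      = ‖(memLp_quantile (hmom i)).toLp - (memLp_quantile (hmom j)).toLp‖ ^ 2 :=
    have := hprob i; have := hprob j; Wsq_eq_norm_sub_sq (hmom i) (hmom j)
  simp_rw [hW, sum_sum_mul_norm_sub_sq _ c _ hc]
  exact mul_nonpos_of_nonpos_of_nonneg (by norm_num) (sq_nonneg _)
end

section
/- Let (E,d) and (E',d') be metric spaces and endow E×E' with the product distance D((x,s),(y,t)) = (d(x,y)² + d'(s,t)²)^{1/2}. If d² and d'² are negative definite kernels, then D^{2H} is a negative definite kernel on E×E' for every 0 ≤ H ≤ 1. -/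
open MeasureTheory ProbabilityTheory Real BigOperators

/-!
`D ^ (2H) = (d² + d'²) ^ H`, and `d² + d'²` is negative definite as a sum of pullbacks of
negative definite kernels. For a symmetric negative definite kernel `K` and a base point `x₀`,
the kernel `K x x₀ + K y x₀ - K x y - K x₀ x₀` is positive semidefinite; by the Schur product
theorem so is its entrywise exponential, of which `exp (-K)` is a diagonal rescaling
(Schoenberg). Applied to `λ K`, this makes `1 - exp (-λ K)` negative definite for all `λ ≥ 0`,
hence so is the positive mixture `K ^ H = C_H⁻¹ ∫₀^∞ (1 - exp (-λ K)) λ ^ (-1 - H) dλ`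
for `0 < H < 1`.
-/

namespace Matrix

variable {ι : Type*} [Fintype ι]

theorem posSemidef_iff_sum_sum {A : Matrix ι ι ℝ} :
    A.PosSemidef ↔ A.IsHermitian ∧ ∀ c : ι → ℝ, 0 ≤ ∑ i, ∑ j, c i * c j * A i j := by
  have hform (c : ι → ℝ) : star c ⬝ᵥ (A *ᵥ c) = ∑ i, ∑ j, c i * c j * A i j := by
    simp only [dotProduct, mulVec, star_trivial, Finset.mul_sum]
    exact Finset.sum_congr rfl fun i _ => Finset.sum_congr rfl fun j _ => by ring
  simp only [posSemidef_iff_dotProduct_mulVec, hform]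

theorem PosSemidef.map_pow {A : Matrix ι ι ℝ} (hA : A.PosSemidef) (k : ℕ) :
    (A.map (· ^ k)).PosSemidef := by
  induction k with
  | zero =>
    convert posSemidef_vecMulVec_self_star (fun _ : ι => (1 : ℝ)) using 1
    ext; simp [vecMulVec]
  | succ k ih =>
    have h : A.map (· ^ (k + 1)) = A.map (· ^ k) ⊙ A := by ext; simp [pow_succ]
    rw [h]
    exact ih.hadamard hA

theorem PosSemidef.map_exp {A : Matrix ι ι ℝ} (hA : A.PosSemidef) :
    (A.map Real.exp).PosSemidef := by
  refine posSemidef_iff_sum_sum.2 ⟨hA.isHermitian.map _ fun _ => rfl, fun c => ?_⟩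
  have hsum : HasSum (fun k : ℕ => (k.factorial : ℝ)⁻¹ * ∑ i, ∑ j, c i * c j * A i j ^ k)
      (∑ i, ∑ j, c i * c j * Real.exp (A i j)) := by
    simp only [Finset.mul_sum]
    refine hasSum_sum fun i _ => hasSum_sum fun j _ => ?_
    simpa [Real.exp_eq_exp_ℝ, div_eq_inv_mul, mul_left_comm] using
      (NormedSpace.expSeries_div_hasSum_exp (A i j)).mul_left (c i * c j)
  refine hsum.nonneg fun k => mul_nonneg (by positivity) ?_
  exact (posSemidef_iff_sum_sum.1 (hA.map_pow k)).2 c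

end Matrix

open Set Matrix

section Kernel

variable {α β : Type*}

/-- The quadratic-form part of the paper's notion of a negative definite kernel. -/
def IsCondNegDef (K : α → α → ℝ) : Prop :=
  ∀ (n : ℕ) (x : Fin n → α) (c : Fin n → ℝ), ∑ i, c i = 0 →
    ∑ i, ∑ j, c i * c j * K (x i) (x j) ≤ 0

def IsPosSemidefKernel (K : α → α → ℝ) : Prop :=
  ∀ (n : ℕ) (x : Fin n → α), (Matrix.of fun i j => K (x i) (x j)).PosSemidef

theorem isCondNegDef_const (a : ℝ) : IsCondNegDef fun _ _ : α => a := by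
  intro n x c hc
  simp [← Finset.sum_mul, ← Finset.mul_sum, hc]

namespace IsCondNegDef

variable {K L : α → α → ℝ}

theorem add (hK : IsCondNegDef K) (hL : IsCondNegDef L) :
    IsCondNegDef fun x y => K x y + L x y := by
  intro n x c hc
  simpa [mul_add, Finset.sum_add_distrib] using add_nonpos (hK n x c hc) (hL n x c hc)

theorem const_mul (hK : IsCondNegDef K) {a : ℝ} (ha : 0 ≤ a) :
    IsCondNegDef fun x y => a * K x y := by
  intro n x c hc
  have h := mul_nonpos_of_nonneg_of_nonpos ha (hK n x c hc)
  simpa [Finset.mul_sum, mul_left_comm] using h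

theorem comp (hK : IsCondNegDef K) (f : β → α) : IsCondNegDef fun x y => K (f x) (f y) :=
  fun n x => hK n (f ∘ x)

theorem integral [MeasurableSpace β] {μ : Measure β} {F : β → α → α → ℝ}
    (hF : ∀ᵐ b ∂μ, IsCondNegDef (F b)) (hint : ∀ x y, Integrable (fun b => F b x y) μ) :
    IsCondNegDef fun x y => ∫ b, F b x y ∂μ := by
  intro n x c hc
  have hint' (i j : Fin n) : Integrable (fun b => c i * c j * F b (x i) (x j)) μ :=
    (hint _ _).const_mul _
  calc ∑ i, ∑ j, c i * c j * ∫ b, F b (x i) (x j) ∂μ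
      = ∫ b, ∑ i, ∑ j, c i * c j * F b (x i) (x j) ∂μ := by
        rw [integral_finsetSum _ fun i _ => integrable_finsetSum _ fun j _ => hint' i j]
        simp_rw [integral_finsetSum _ fun j _ => hint' _ j, integral_const_mul]
    _ ≤ 0 := integral_nonpos_of_ae (hF.mono fun b hb => hb n x c hc)

end IsCondNegDef

namespace IsPosSemidefKernel

variable {K : α → α → ℝ}

theorem isCondNegDef_neg (hK : IsPosSemidefKernel K) : IsCondNegDef fun x y => -K x y := by
  intro n x c _
  simpa using (posSemidef_iff_sum_sum.1 (hK n x)).2 c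

theorem exp (hK : IsPosSemidefKernel K) : IsPosSemidefKernel fun x y => Real.exp (K x y) :=
  fun n x => (hK n x).map_exp

theorem mul_mul (hK : IsPosSemidefKernel K) (d : α → ℝ) :
    IsPosSemidefKernel fun x y => d x * K x y * d y := by
  intro n x
  convert (hK n x).conjTranspose_mul_mul_same (diagonal (d ∘ x)) using 1
  ext i j
  simp [diagonal_mul, mul_diagonal]

end IsPosSemidefKernel

theorem IsCondNegDef.isPosSemidefKernel_sub {K : α → α → ℝ} (hK : IsCondNegDef K)
    (hsymm : ∀ x y, K x y = K y x) (x₀ : α) :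
    IsPosSemidefKernel fun x y => K x x₀ + K y x₀ - K x y - K x₀ x₀ := by
  intro n x
  refine posSemidef_iff_sum_sum.2 ⟨?_, fun c => ?_⟩
  · ext i j
    simp [hsymm (x i) (x j), add_comm]
  set s := ∑ i, c i
  set S := ∑ i, c i * K (x i) x₀
  -- adjoin `x₀` with weight `-s` to get a configuration of total weight zero
  have hext := hK (n + 1) (Fin.cons x₀ x) (Fin.cons (-s) c) (by simp [Fin.sum_univ_succ, s])
  simp only [Fin.sum_univ_succ, Fin.cons_zero, Fin.cons_succ, Finset.sum_add_distrib] at hext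
  have hleft : ∑ j, -s * c j * K x₀ (x j) = -s * S := by
    rw [Finset.mul_sum]
    exact Finset.sum_congr rfl fun j _ => by rw [hsymm x₀]; ring
  have hright : ∑ i, c i * -s * K (x i) x₀ = -s * S := by
    rw [Finset.mul_sum]
    exact Finset.sum_congr rfl fun i _ => by ring
  have hpt (i j : Fin n) : c i * c j * (of fun i j => K (x i) x₀ + K (x j) x₀ - K (x i) (x j)
      - K x₀ x₀) i j = (c i * K (x i) x₀) * c j + c i * (c j * K (x j) x₀)
        - c i * c j * K (x i) (x j) - (c i * K x₀ x₀) * c j := by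
    simp only [of_apply]; ring
  simp only [hpt, Finset.sum_add_distrib, Finset.sum_sub_distrib, ← Finset.sum_mul_sum,
    ← Finset.sum_mul]
  linarith

theorem IsCondNegDef.isPosSemidefKernel_exp_neg {K : α → α → ℝ} (hK : IsCondNegDef K)
    (hsymm : ∀ x y, K x y = K y x) : IsPosSemidefKernel fun x y => Real.exp (-K x y) := by
  intro n x
  cases n with
  | zero => exact posSemidef_iff_sum_sum.2 ⟨by ext i; exact i.elim0, by simp⟩
  | succ n =>
    set x₀ := x 0
    convert ((hK.isPosSemidefKernel_sub hsymm x₀).exp.mul_mul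
      fun y => Real.exp (K x₀ x₀ / 2 - K y x₀)) (n + 1) x using 1
    ext i j
    simp only [of_apply, ← Real.exp_add]
    ring_nf

section Integral

variable {H : ℝ}

theorem integrableOn_one_sub_exp_mul_rpow (h0 : 0 < H) (h1 : H < 1) {t : ℝ} (ht : 0 ≤ t) :
    IntegrableOn (fun l => (1 - Real.exp (-(l * t))) * l ^ (-1 - H)) (Ioi 0) := by
  have hmeas : AEStronglyMeasurable (fun l => (1 - Real.exp (-(l * t))) * l ^ (-1 - H)) :=
    (by fun_prop : Measurable _).aestronglyMeasurable
  have hbound {l : ℝ} (hl : 0 < l) :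
      ‖(1 - Real.exp (-(l * t))) * l ^ (-1 - H)‖ ≤ min (l * t) 1 * l ^ (-1 - H) := by
    have hexp := Real.add_one_le_exp (-(l * t))
    have hexp' : Real.exp (-(l * t)) ≤ 1 := Real.exp_le_one_iff.2 (by nlinarith)
    rw [Real.norm_of_nonneg (by bound)]
    gcongr
    exact le_min (by linarith) (by linarith [Real.exp_pos (-(l * t))])
  rw [← Ioc_union_Ioi_eq_Ioi zero_le_one]
  refine IntegrableOn.union ?_ ?_
  · have hint : IntegrableOn (fun l : ℝ => t * l ^ (-H)) (Ioc 0 1) := by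
      refine Integrable.const_mul ?_ t
      have := intervalIntegral.intervalIntegrable_rpow' (a := 0) (b := 1) (r := -H) (by linarith)
      rwa [intervalIntegrable_iff_integrableOn_Ioc_of_le zero_le_one] at this
    refine hint.mono' hmeas.restrict ((ae_restrict_iff' measurableSet_Ioc).2 ?_)
    refine Filter.Eventually.of_forall fun l ⟨hl, _⟩ => (hbound hl).trans ?_
    calc min (l * t) 1 * l ^ (-1 - H) ≤ l * t * l ^ (-1 - H) := by gcongr; exact min_le_left _ _
      _ = t * l ^ (-H) := by
        rw [show -H = 1 + (-1 - H) by ring, Real.rpow_add hl, Real.rpow_one]; ring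
  · have hint : IntegrableOn (fun l : ℝ => l ^ (-1 - H)) (Ioi 1) :=
      integrableOn_Ioi_rpow_of_lt (by linarith) one_pos
    refine hint.mono' hmeas.restrict ((ae_restrict_iff' measurableSet_Ioi).2 ?_)
    refine Filter.Eventually.of_forall fun l (hl : 1 < l) => (hbound (one_pos.trans hl)).trans ?_
    calc min (l * t) 1 * l ^ (-1 - H) ≤ 1 * l ^ (-1 - H) := by gcongr; exact min_le_right _ _
      _ = l ^ (-1 - H) := one_mul _

theorem integral_one_sub_exp_mul_rpow (h0 : 0 < H) {t : ℝ} (ht : 0 ≤ t) :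
    ∫ l in Ioi 0, (1 - Real.exp (-(l * t))) * l ^ (-1 - H)
      = t ^ H * ∫ l in Ioi 0, (1 - Real.exp (-l)) * l ^ (-1 - H) := by
  rcases ht.eq_or_lt with rfl | ht
  · simp [Real.zero_rpow h0.ne']
  have hscale : ∀ l ∈ Ioi (0 : ℝ), (1 - Real.exp (-(l * t))) * l ^ (-1 - H)
      = t ^ (1 + H) * ((1 - Real.exp (-(t * l))) * (t * l) ^ (-1 - H)) := by
    intro l hl
    rw [Real.mul_rpow ht.le (le_of_lt hl), mul_comm l t]
    rw [show t ^ (1 + H) * ((1 - Real.exp (-(t * l))) * (t ^ (-1 - H) * l ^ (-1 - H)))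
        = (1 - Real.exp (-(t * l))) * (t ^ (1 + H) * t ^ (-1 - H)) * l ^ (-1 - H) by ring,
      ← Real.rpow_add ht]
    simp
  rw [setIntegral_congr_fun measurableSet_Ioi hscale, integral_const_mul,
    integral_comp_mul_left_Ioi (fun l => (1 - Real.exp (-l)) * l ^ (-1 - H)) 0 ht, mul_zero,
    smul_eq_mul, ← mul_assoc, add_comm 1 H, Real.rpow_add ht, Real.rpow_one,
    mul_inv_cancel_right₀ ht.ne']

theorem integral_one_sub_exp_rpow_pos (h0 : 0 < H) (h1 : H < 1) :
    0 < ∫ l in Ioi 0, (1 - Real.exp (-l)) * l ^ (-1 - H) := by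
  have hpos : ∀ l ∈ Ioi (0 : ℝ), 0 < (1 - Real.exp (-l)) * l ^ (-1 - H) := fun l (hl : 0 < l) =>
    mul_pos (by simpa using hl) (Real.rpow_pos_of_pos hl _)
  have hint := integrableOn_one_sub_exp_mul_rpow h0 h1 zero_le_one
  simp only [mul_one] at hint
  rw [setIntegral_pos_iff_support_of_nonneg_ae
    ((ae_restrict_iff' measurableSet_Ioi).2 (.of_forall fun l hl => (hpos l hl).le)) hint]
  refine lt_of_lt_of_le (by simp) (measure_mono fun l hl => ⟨(hpos l hl).ne', hl⟩)

end Integral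

theorem IsCondNegDef.rpow {K : α → α → ℝ} (hK : IsCondNegDef K) (hsymm : ∀ x y, K x y = K y x)
    (hnonneg : ∀ x y, 0 ≤ K x y) {H : ℝ} (h0 : 0 ≤ H) (h1 : H ≤ 1) :
    IsCondNegDef fun x y => K x y ^ H := by
  rcases h0.eq_or_lt with rfl | h0
  · simpa using isCondNegDef_const 1
  rcases h1.eq_or_lt with rfl | h1
  · simpa using hK
  have hC := integral_one_sub_exp_rpow_pos h0 h1
  set C := ∫ l in Ioi 0, (1 - Real.exp (-l)) * l ^ (-1 - H)
  have hrepr : (fun x y => K x y ^ H) = fun x y =>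
      C⁻¹ * ∫ l in Ioi 0, (1 - Real.exp (-(l * K x y))) * l ^ (-1 - H) := by
    ext x y
    rw [integral_one_sub_exp_mul_rpow h0 (hnonneg x y), mul_comm C⁻¹, mul_inv_cancel_right₀ hC.ne']
  rw [hrepr]
  refine IsCondNegDef.const_mul ?_ (inv_nonneg.2 hC.le)
  refine IsCondNegDef.integral ?_ fun x y => integrableOn_one_sub_exp_mul_rpow h0 h1 (hnonneg x y)
  filter_upwards [ae_restrict_mem measurableSet_Ioi] with l (hl : 0 < l)
  have hexp := ((hK.const_mul hl.le).isPosSemidefKernel_exp_neg fun x y => by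
    rw [hsymm]).isCondNegDef_neg
  simpa [sub_eq_add_neg, mul_comm] using
    ((isCondNegDef_const 1).add hexp).const_mul (Real.rpow_nonneg hl.le (-1 - H))

end Kernel

/-- If d² and d'² are negative definite, then the product distance to the power 2H
is negative definite on E × E' for 0 ≤ H ≤ 1. -/
theorem product_dist_pow_negDef {E E' : Type*} [MetricSpace E] [MetricSpace E']
    (hd : ∀ (n : ℕ) (x : Fin n → E) (c : Fin n → ℝ), ∑ i, c i = 0 →
      ∑ i, ∑ j, c i * c j * (dist (x i) (x j)) ^ 2 ≤ 0)
    (hd' : ∀ (n : ℕ) (x : Fin n → E') (c : Fin n → ℝ), ∑ i, c i = 0 →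
      ∑ i, ∑ j, c i * c j * (dist (x i) (x j)) ^ 2 ≤ 0)
    (H : ℝ) (h0 : 0 ≤ H) (h1 : H ≤ 1) :
    ∀ (n : ℕ) (z : Fin n → E × E') (c : Fin n → ℝ), ∑ i, c i = 0 →
      ∑ i, ∑ j, c i * c j *
        (Real.sqrt ((dist (z i).1 (z j).1) ^ 2 + (dist (z i).2 (z j).2) ^ 2))
          ^ (2 * H) ≤ 0 := by
  have hE : IsCondNegDef fun x y : E => dist x y ^ 2 := hd
  have hE' : IsCondNegDef fun x y : E' => dist x y ^ 2 := hd'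
  have hsum : IsCondNegDef fun p q : E × E' => dist p.1 q.1 ^ 2 + dist p.2 q.2 ^ 2 :=
    (hE.comp Prod.fst).add (hE'.comp Prod.snd)
  have hpow := hsum.rpow (fun p q => by simp only [dist_comm]) (fun p q => by positivity) h0 h1
  intro n z c hc
  convert hpow n z c hc using 4 with i _ j _
  rw [Real.sqrt_eq_rpow, ← Real.rpow_mul (by positivity)]
  ring_nf
end
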